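/- For every sufficiently large even integer N: the number of primes p with N/2 − N^{0.919} ≤ p ≤ N/2 + N^{0.919}, N − p ≥ 1 and Ω(N − p) ≤ 3 is at least S₁'(N) − (1/2)·S₂'(N) − E'(N), where E'(N) is the number of primes p in [N/2 − N^{0.919}, N/2 + N^{0.919}] such that q² divides N − p for some prime q ≥ N^{1/11.99}. -/

import Mathlib

/-! For large `N` the window lies below `N`, so `N - p ≥ 1` for every `p` in it. If `p` is
counted by `S₁'`, every prime factor `q` of `N - p` satisfies `q ≥ N^(1/11.99)` and `q ∤ N`
(a common prime factor of `N` and `N - p` would divide the prime `p ∤ N`). Unless `p` is counted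
by `E'`, `N - p` is therefore squarefree, and since `N - p < N` it has at most two prime factors
`≥ N^(1/3)`. So if `Ω(N - p) ≥ 4`, then `N - p` has two distinct prime factors `q < N^(1/3)`, and
each of the pairs `(q, p)` is counted by `S₂'`. Counting these pairs with weight `1/2` gives
`S₁' ≤ #{Ω(N - p) ≤ 3} + E' + S₂'/2`. -/

/-- `S₁'(N)`: the number of primes `p` with `N/2 − N^0.919 ≤ p ≤ N/2 + N^0.919`, `p ∤ N`,
such that every prime `q < N^(1/11.99)` with `q ∤ N` satisfies `q ∤ N − p`. -/
noncomputable def S1' (N : ℕ) : ℕ :=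
  {p : ℕ | p.Prime ∧ (N : ℝ) / 2 - (N : ℝ) ^ (0.919 : ℝ) ≤ (p : ℝ) ∧
    (p : ℝ) ≤ (N : ℝ) / 2 + (N : ℝ) ^ (0.919 : ℝ) ∧ ¬ p ∣ N ∧
    ∀ q : ℕ, q.Prime → (q : ℝ) < (N : ℝ) ^ (1 / 11.99 : ℝ) → ¬ q ∣ N →
      ¬ q ∣ (N - p)}.ncard

/-- `S₂'(N) = Σ_q #{p prime : N/2 − N^0.919 ≤ p ≤ N/2 + N^0.919, p ∤ N, q ∣ N − p, and
every prime `r < N^(1/11.99)` with `r ∤ N` satisfies `r ∤ N − p}`, summed over primes `q`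
with `N^(1/11.99) ≤ q < N^(1/3)` and `q ∤ N`; encoded as a count of pairs `(q, p)`. -/
noncomputable def S2' (N : ℕ) : ℕ :=
  {qp : ℕ × ℕ | qp.1.Prime ∧ (N : ℝ) ^ (1 / 11.99 : ℝ) ≤ (qp.1 : ℝ) ∧
    (qp.1 : ℝ) < (N : ℝ) ^ (1 / 3 : ℝ) ∧ ¬ qp.1 ∣ N ∧
    qp.2.Prime ∧ (N : ℝ) / 2 - (N : ℝ) ^ (0.919 : ℝ) ≤ (qp.2 : ℝ) ∧
    (qp.2 : ℝ) ≤ (N : ℝ) / 2 + (N : ℝ) ^ (0.919 : ℝ) ∧ ¬ qp.2 ∣ N ∧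
    qp.1 ∣ (N - qp.2) ∧
    ∀ r : ℕ, r.Prime → (r : ℝ) < (N : ℝ) ^ (1 / 11.99 : ℝ) → ¬ r ∣ N →
      ¬ r ∣ (N - qp.2)}.ncard

/-- `E'(N)`: the number of primes `p` in `[N/2 − N^0.919, N/2 + N^0.919]` such that `q²`
divides `N − p` for some prime `q ≥ N^(1/11.99)`. -/
noncomputable def E1' (N : ℕ) : ℕ :=
  {p : ℕ | p.Prime ∧ (N : ℝ) / 2 - (N : ℝ) ^ (0.919 : ℝ) ≤ (p : ℝ) ∧
    (p : ℝ) ≤ (N : ℝ) / 2 + (N : ℝ) ^ (0.919 : ℝ) ∧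
    ∃ q : ℕ, q.Prime ∧ (N : ℝ) ^ (1 / 11.99 : ℝ) ≤ (q : ℝ) ∧ q ^ 2 ∣ (N - p)}.ncard

open Filter Finset

section DoubleCounting

variable {α β : Type*}

theorem two_mul_ncard_le_ncard_of_two_le_fiber {H : Set α} {T : Set (β × α)} (hH : H.Finite)
    (hT : T.Finite) (h : ∀ p ∈ H, ∃ q₁ q₂, q₁ ≠ q₂ ∧ (q₁, p) ∈ T ∧ (q₂, p) ∈ T) :
    2 * H.ncard ≤ T.ncard := by
  classical
  rw [Set.ncard_eq_toFinset_card H hH, Set.ncard_eq_toFinset_card T hT, mul_comm]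
  simpa using card_mul_le_card_mul (fun p x => x.2 = p) (m := 2) (n := 1)
    (s := hH.toFinset) (t := hT.toFinset)
    (fun p hp => by
      obtain ⟨q₁, q₂, hne, h₁, h₂⟩ := h p (by simpa using hp)
      refine one_lt_card.2 ⟨(q₁, p), ?_, (q₂, p), ?_, by simpa using hne⟩ <;>
        simpa [bipartiteAbove])
    (fun x _ => card_le_one.2 fun a ha b hb => by
      simp only [bipartiteBelow, mem_filter] at ha hb
      exact ha.2.symm.trans hb.2)

theorem ncard_sub_half_mul_sub_le {A G B : Set α} {T : Set (β × α)} (hG : G.Finite)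
    (hB : B.Finite) (hT : T.Finite)
    (h : ∀ p ∈ A, p ∉ G → p ∉ B → ∃ q₁ q₂, q₁ ≠ q₂ ∧ (q₁, p) ∈ T ∧ (q₂, p) ∈ T) :
    (A.ncard : ℝ) - 1 / 2 * T.ncard - B.ncard ≤ G.ncard := by
  set H := A \ (G ∪ B)
  have hH : ∀ p ∈ H, ∃ q₁ q₂, q₁ ≠ q₂ ∧ (q₁, p) ∈ T ∧ (q₂, p) ∈ T := fun p ⟨hpA, hp⟩ =>
    h p hpA (fun hG => hp (Or.inl hG)) fun hB => hp (Or.inr hB)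
  have hHfin : H.Finite := (hT.image Prod.snd).subset fun p hp => by
    obtain ⟨q, -, -, hq, -⟩ := hH p hp
    exact ⟨(q, p), hq, rfl⟩
  have hA : A.ncard ≤ G.ncard + B.ncard + H.ncard :=
    calc A.ncard ≤ (G ∪ B ∪ H).ncard :=
          Set.ncard_le_ncard (fun p hp => by by_cases p ∈ G ∪ B <;> simp_all [H])
            ((hG.union hB).union hHfin)
      _ ≤ (G ∪ B).ncard + H.ncard := Set.ncard_union_le _ _
      _ ≤ G.ncard + B.ncard + H.ncard := by gcongr; exact Set.ncard_union_le _ _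
  have hH' : (2 * H.ncard : ℝ) ≤ T.ncard := by
    exact_mod_cast two_mul_ncard_le_ncard_of_two_le_fiber hHfin hT hH
  have hA' : (A.ncard : ℝ) ≤ G.ncard + B.ncard + H.ncard := by exact_mod_cast hA
  linarith

end DoubleCounting

theorem Set.finite_of_forall_natCast_le {s : Set ℕ} {x : ℝ} (h : ∀ n ∈ s, (n : ℝ) ≤ x) :
    s.Finite :=
  (Set.finite_Iic ⌊x⌋₊).subset fun n hn => Nat.le_floor (h n hn)

theorem eventually_half_add_rpow_lt {θ : ℝ} (hθ : θ < 1) :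
    ∀ᶠ N : ℕ in atTop, (N : ℝ) / 2 + (N : ℝ) ^ θ < N := by
  have hgrow : Tendsto (fun N : ℕ => (N : ℝ) ^ (1 - θ)) atTop atTop :=
    (tendsto_rpow_atTop (by linarith)).comp tendsto_natCast_atTop_atTop
  filter_upwards [hgrow.eventually_gt_atTop 2, eventually_gt_atTop 0] with N h2 hN
  have hN' : (0 : ℝ) < N := by exact_mod_cast hN
  have hsplit : (N : ℝ) = (N : ℝ) ^ θ * (N : ℝ) ^ (1 - θ) := by
    rw [← Real.rpow_add hN', add_sub_cancel, Real.rpow_one]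
  have : (N : ℝ) ^ θ * 2 < (N : ℝ) ^ θ * (N : ℝ) ^ (1 - θ) := by gcongr
  linarith

theorem Nat.Prime.not_dvd_of_dvd_sub {p q N : ℕ} (hp : p.Prime) (hq : q.Prime)
    (hpN : ¬ p ∣ N) (hle : p ≤ N) (hqNp : q ∣ N - p) : ¬ q ∣ N := fun hqN => by
  have hqp : q ∣ p := by simpa [Nat.sub_sub_self hle] using Nat.dvd_sub hqN hqNp
  exact hpN ((Nat.prime_dvd_prime_iff_eq hq hp).1 hqp ▸ hqN)

theorem Nat.card_filter_primeFactors_le_lt {m k : ℕ} {y : ℝ} (hy : 0 ≤ y) (hm : m ≠ 0)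
    (hmy : (m : ℝ) < y ^ k) : #(m.primeFactors.filter fun q : ℕ => y ≤ q) < k := by
  by_contra! hk
  obtain ⟨s, hs, rfl⟩ := exists_subset_card_eq hk
  have hprod : ∏ q ∈ s, q ≤ m := Nat.le_of_dvd (Nat.pos_of_ne_zero hm) <|
    (prod_dvd_prod_of_subset _ _ _ (hs.trans (filter_subset _ _))).trans
      (Nat.prod_primeFactors_dvd m)
  have : y ^ #s ≤ m :=
    calc y ^ #s = ∏ _q ∈ s, y := (prod_const y).symm
      _ ≤ ∏ q ∈ s, (q : ℝ) := prod_le_prod (fun _ _ => hy) fun q hq => (mem_filter.1 (hs hq)).2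
      _ ≤ m := by rw [← Nat.cast_prod]; exact_mod_cast hprod
  linarith

theorem Nat.exists_two_primeFactors_lt {m k : ℕ} {y : ℝ} (hy : 0 ≤ y) (hsf : Squarefree m)
    (hmy : (m : ℝ) < y ^ k) (hΩ : k < m.primeFactorsList.length) :
    ∃ q₁ q₂, q₁ ≠ q₂ ∧ q₁ ∈ m.primeFactors ∧ q₂ ∈ m.primeFactors ∧ (q₁ : ℝ) < y ∧ (q₂ : ℝ) < y := by
  classical
  have hm := hsf.ne_zero
  have hω : #m.primeFactors = m.primeFactorsList.length := by
    rw [← Nat.toFinset_factors, List.toFinset_card_of_nodup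
      ((Nat.squarefree_iff_nodup_primeFactorsList hm).1 hsf)]
  have hsplit := card_filter_add_card_filter_not (s := m.primeFactors) (fun q : ℕ => y ≤ (q : ℝ))
  have hlarge := Nat.card_filter_primeFactors_le_lt hy hm hmy
  obtain ⟨q₁, h₁, q₂, h₂, hne⟩ :=
    one_lt_card.1 (show 1 < #(m.primeFactors.filter fun q : ℕ => ¬ y ≤ q) by omega)
  simp only [mem_filter, not_le] at h₁ h₂
  exact ⟨q₁, q₂, hne, h₁.1, h₂.1, h₁.2, h₂.2⟩

theorem exists_two_prime_factors_of_sieve_survivor {N p k : ℕ} {z y : ℝ} (hy : 0 ≤ y)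
    (hNy : (N : ℝ) ≤ y ^ k) (hp : p.Prime) (hpN : p < N) (hpdvd : ¬ p ∣ N)
    (hsurv : ∀ q : ℕ, q.Prime → (q : ℝ) < z → ¬ q ∣ N → ¬ q ∣ N - p)
    (hE : ¬ ∃ q : ℕ, q.Prime ∧ z ≤ q ∧ q ^ 2 ∣ N - p)
    (hΩ : k < (N - p).primeFactorsList.length) :
    ∃ q₁ q₂ : ℕ, q₁ ≠ q₂ ∧
      (q₁.Prime ∧ z ≤ q₁ ∧ (q₁ : ℝ) < y ∧ ¬ q₁ ∣ N ∧ q₁ ∣ N - p) ∧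
      (q₂.Prime ∧ z ≤ q₂ ∧ (q₂ : ℝ) < y ∧ ¬ q₂ ∣ N ∧ q₂ ∣ N - p) := by
  have hlarge : ∀ q : ℕ, q.Prime → q ∣ N - p → z ≤ q ∧ ¬ q ∣ N := fun q hq hqd =>
    have hqN := hp.not_dvd_of_dvd_sub hq hpdvd hpN.le hqd
    ⟨not_lt.1 fun hqz => hsurv q hq hqz hqN hqd, hqN⟩
  have hsf : Squarefree (N - p) := Nat.squarefree_iff_prime_squarefree.2 fun q hq hq2 =>
    hE ⟨q, hq, (hlarge q hq (dvd_of_mul_left_dvd hq2)).1, by rwa [sq]⟩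
  have hNp : ((N - p : ℕ) : ℝ) < y ^ k :=
    lt_of_lt_of_le (by exact_mod_cast Nat.sub_lt (hp.pos.trans hpN) hp.pos) hNy
  obtain ⟨q₁, q₂, hne, h₁, h₂, hy₁, hy₂⟩ := Nat.exists_two_primeFactors_lt hy hsf hNp hΩ
  have hgood : ∀ q ∈ (N - p).primeFactors, q.Prime ∧ z ≤ q ∧ ¬ q ∣ N ∧ q ∣ N - p :=
    fun q hq => have hq' := Nat.prime_of_mem_primeFactors hq
      have hqd := Nat.dvd_of_mem_primeFactors hq
      ⟨hq', (hlarge q hq' hqd).1, (hlarge q hq' hqd).2, hqd⟩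
  obtain ⟨hq₁, hz₁, hN₁, hd₁⟩ := hgood q₁ h₁
  obtain ⟨hq₂, hz₂, hN₂, hd₂⟩ := hgood q₂ h₂
  exact ⟨q₁, q₂, hne, ⟨hq₁, hz₁, hy₁, hN₁, hd₁⟩, hq₂, hz₂, hy₂, hN₂, hd₂⟩

theorem weighted_sieve_short_intervals :
    ∃ N₀ : ℕ, ∀ N : ℕ, N₀ ≤ N → Even N →
      (S1' N : ℝ) - (1 / 2) * (S2' N : ℝ) - (E1' N : ℝ) ≤
        ({p : ℕ | p.Prime ∧ (N : ℝ) / 2 - (N : ℝ) ^ (0.919 : ℝ) ≤ (p : ℝ) ∧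
            (p : ℝ) ≤ (N : ℝ) / 2 + (N : ℝ) ^ (0.919 : ℝ) ∧ 1 ≤ N - p ∧
            (N - p).primeFactorsList.length ≤ 3}.ncard : ℝ) := by
  obtain ⟨N₀, hN₀⟩ := eventually_atTop.1 (eventually_half_add_rpow_lt (θ := 0.919) (by norm_num))
  refine ⟨N₀, fun N hN _ => ?_⟩
  have hcube : (N : ℝ) ≤ ((N : ℝ) ^ (1 / 3 : ℝ)) ^ 3 := by
    rw [← Real.rpow_natCast, ← Real.rpow_mul (Nat.cast_nonneg _)]; norm_num
  refine ncard_sub_half_mul_sub_le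
    (Set.finite_of_forall_natCast_le fun p hp => hp.2.2.1)
    (Set.finite_of_forall_natCast_le fun p hp => hp.2.2.1)
    (((Set.finite_of_forall_natCast_le fun q hq => hq).prod
      (Set.finite_of_forall_natCast_le fun p hp => hp)).subset
        fun qp h => ⟨h.2.2.1.le, h.2.2.2.2.2.2.1⟩)
    fun p ⟨hp, hlo, hhi, hpdvd, hsurv⟩ hG hE => ?_
  have hpN : p < N := by exact_mod_cast hhi.trans_lt (hN₀ N hN)
  have hΩ : 3 < (N - p).primeFactorsList.length :=
    not_le.1 fun hΩ => hG ⟨hp, hlo, hhi, by omega, hΩ⟩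
  obtain ⟨q₁, q₂, hne, ⟨hq₁, hz₁, hy₁, hN₁, hd₁⟩, hq₂, hz₂, hy₂, hN₂, hd₂⟩ :=
    exists_two_prime_factors_of_sieve_survivor (by positivity) hcube hp hpN hpdvd hsurv
      (fun h => hE ⟨hp, hlo, hhi, h⟩) hΩ
  exact ⟨q₁, q₂, hne, ⟨hq₁, hz₁, hy₁, hN₁, hp, hlo, hhi, hpdvd, hd₁, hsurv⟩,
    hq₂, hz₂, hy₂, hN₂, hp, hlo, hhi, hpdvd, hd₂, hsurv⟩
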